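/- Let n ≥ 1, let p ∈ ℝⁿ, let j ∈ {1, …, n}, let c ∈ ℝ, and let v, w, π : ℝⁿ → ℝ be ℤⁿ-periodic C² functions such that: (a) (1/2)Δπ(x) + div((p + ∇v(x)) π(x)) = 0 for all x ∈ ℝⁿ; (b) ∫_{[0,1]ⁿ} π(x) dx = 1; (c) −(1/2)Δw(x) + (p + ∇v(x))·(e_j + ∇w(x)) = c for all x ∈ ℝⁿ, where e_j is the j-th standard basis vector. Then c = ∫_{[0,1]ⁿ} (p_j + ∂_j v(x)) π(x) dx. -/

import Mathlib

open scoped RealInnerProductSpace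
open MeasureTheory

/-- The Euclidean Laplacian: sum of second partial derivatives. -/
noncomputable def lap {n : ℕ} (f : EuclideanSpace ℝ (Fin n) → ℝ)
    (x : EuclideanSpace ℝ (Fin n)) : ℝ :=
  ∑ i : Fin n,
    fderiv ℝ (fun y => fderiv ℝ f y (EuclideanSpace.single i 1)) x (EuclideanSpace.single i 1)

/-- The divergence of a vector field: sum of partial derivatives of the components. -/
noncomputable def dvg {n : ℕ} (F : EuclideanSpace ℝ (Fin n) → EuclideanSpace ℝ (Fin n))
    (x : EuclideanSpace ℝ (Fin n)) : ℝ :=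
  ∑ i : Fin n, fderiv ℝ (fun y => F y i) x (EuclideanSpace.single i 1)

/-- A function on ℝⁿ is ℤⁿ-periodic if it is invariant under translation by
every integer vector. -/
def IsZnPeriodic {n : ℕ} {α : Type*} (f : EuclideanSpace ℝ (Fin n) → α) : Prop :=
  ∀ (x : EuclideanSpace ℝ (Fin n)) (k : Fin n → ℤ),
    f (x + ∑ i : Fin n, (k i : ℝ) • EuclideanSpace.single i (1 : ℝ)) = f x

/-- The unit cube [0,1]ⁿ in ℝⁿ. -/
def unitCube (n : ℕ) : Set (EuclideanSpace ℝ (Fin n)) :=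
  {x | ∀ i, x i ∈ Set.Icc (0 : ℝ) 1}

/-! With `b = p + ∇v` and `L = -½Δ + b·∇`, hypothesis (c) says `L w = c - b_j` and (a) says that
`π` is annihilated by the formal adjoint `L*`. Green's identity `π L w - w L* π = div J` holds for
an explicit flux `J` built from `w`, `π`, their gradients and `b`; `J` is `ℤⁿ`-periodic, so by the
divergence theorem its divergence integrates to zero over the unit cube (opposite faces cancel).
Hence `∫ π (c - b_j) = 0`, and the normalization (b) turns this into the formula for `c`. -/

variable {n : ℕ}

local notation "E" => EuclideanSpace ℝ (Fin n)

lemma gradient_apply_eq_fderiv_single (f : E → ℝ) (x : E) (i : Fin n) :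
    gradient f x i = fderiv ℝ f x (EuclideanSpace.single i 1) := by
  rw [← inner_gradient_left, EuclideanSpace.inner_single_right]
  simp

lemma contDiff_gradient {f : E → ℝ} {k m : WithTop ℕ∞} (hf : ContDiff ℝ k f) (hmk : m + 1 ≤ k) :
    ContDiff ℝ m (gradient f) :=
  (contDiff_piLp 2).2 fun i => by
    simp_rw [gradient_apply_eq_fderiv_single]
    exact (hf.fderiv_right hmk).clm_apply contDiff_const

lemma dvg_gradient (f : E → ℝ) (x : E) : dvg (gradient f) x = lap f x := by
  simp_rw [dvg, lap, gradient_apply_eq_fderiv_single]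

lemma dvg_add {F G : E → E} {x : E} (hF : DifferentiableAt ℝ F x)
    (hG : DifferentiableAt ℝ G x) :
    dvg (fun y => F y + G y) x = dvg F x + dvg G x := by
  simp only [dvg, PiLp.add_apply, ← Finset.sum_add_distrib]
  refine Finset.sum_congr rfl fun i _ => ?_
  rw [fderiv_fun_add ((differentiableAt_piLp 2).1 hF i) ((differentiableAt_piLp 2).1 hG i)]
  rfl

lemma dvg_smul {f : E → ℝ} {F : E → E} {x : E} (hf : DifferentiableAt ℝ f x)
    (hF : DifferentiableAt ℝ F x) :
    dvg (fun y => f y • F y) x = f x * dvg F x + ⟪gradient f x, F x⟫ := by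
  simp only [dvg, PiLp.smul_apply, smul_eq_mul, PiLp.inner_apply, Finset.mul_sum,
    ← Finset.sum_add_distrib, gradient_apply_eq_fderiv_single]
  refine Finset.sum_congr rfl fun i _ => ?_
  rw [fderiv_fun_mul hf ((differentiableAt_piLp 2).1 hF i)]
  simp only [add_apply, smul_apply, smul_eq_mul, Real.inner_apply]
  ring

lemma dvg_const_smul (a : ℝ) {F : E → E} {x : E} (hF : DifferentiableAt ℝ F x) :
    dvg (fun y => a • F y) x = a * dvg F x := by
  simp only [dvg, PiLp.smul_apply, smul_eq_mul, Finset.mul_sum]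
  refine Finset.sum_congr rfl fun i _ => ?_
  rw [fderiv_const_mul ((differentiableAt_piLp 2).1 hF i)]
  rfl

lemma IsZnPeriodic.fderiv {F : Type*} [NormedAddCommGroup F] [NormedSpace ℝ F] {f : E → F}
    (hf : IsZnPeriodic f) : IsZnPeriodic (fderiv ℝ f) := fun x k => by
  rw [← fderiv_comp_add_right]
  exact congrArg (_root_.fderiv ℝ · x) (funext fun y => hf y k)

lemma IsZnPeriodic.gradient {f : E → ℝ} (hf : IsZnPeriodic f) : IsZnPeriodic (gradient f) :=
  fun x k => by simp only [_root_.gradient, hf.fderiv x k]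

lemma IsZnPeriodic.add_single {α : Type*} {f : E → α} (hf : IsZnPeriodic f) (x : E)
    (i : Fin n) : f (x + EuclideanSpace.single i 1) = f x := by
  have h := hf x (Pi.single i 1)
  rwa [Finset.sum_eq_single i (fun j _ hj => by simp [hj]) (by simp), Pi.single_eq_same,
    Int.cast_one, one_smul] at h

lemma unitCube_eq_preimage_ofLp : unitCube n = WithLp.ofLp ⁻¹' Set.Icc 0 1 := by
  ext x
  simp [unitCube, Pi.le_def, forall_and]

lemma isCompact_unitCube : IsCompact (unitCube n) := by
  rw [unitCube_eq_preimage_ofLp]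
  exact (PiLp.homeomorph 2 _).isCompact_preimage.2 isCompact_Icc

lemma Continuous.integrableOn_unitCube {f : E → ℝ} (hf : Continuous f) :
    IntegrableOn f (unitCube n) :=
  hf.continuousOn.integrableOn_compact isCompact_unitCube

lemma setIntegral_unitCube (g : E → ℝ) :
    ∫ x in unitCube n, g x = ∫ y in Set.Icc (0 : Fin n → ℝ) 1, g (WithLp.toLp 2 y) := by
  rw [unitCube_eq_preimage_ofLp, ← (PiLp.volume_preserving_ofLp (Fin n)).setIntegral_preimage_emb
    (MeasurableEquiv.toLp 2 _).symm.measurableEmbedding]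

lemma ContDiff.continuous_dvg {F : E → E} (hF : ContDiff ℝ 1 F) : Continuous (dvg F) :=
  continuous_finsetSum _ fun i _ =>
    ((((contDiff_piLp 2).1 hF i).continuous_fderiv one_ne_zero).clm_apply continuous_const)

lemma Fin.insertNth_eq_insertNth_zero_add_single {α : Type*} [AddZeroClass α] {m : ℕ}
    (i : Fin (m + 1)) (a : α) (x : Fin m → α) :
    (Fin.insertNth i a x : Fin (m + 1) → α) = Fin.insertNth i 0 x + Pi.single i a := by
  ext t
  refine Fin.succAboveCases i ?_ (fun j => ?_) t
  · simp
  · simp [Fin.insertNth_apply_succAbove, Fin.succAbove_ne i j]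

lemma integral_unitCube_dvg_eq_zero {F : E → E} (hF : ContDiff ℝ 1 F) (hFp : IsZnPeriodic F) :
    ∫ x in unitCube n, dvg F x = 0 := by
  cases n with
  | zero => simp [dvg]
  | succ m =>
    have hFi : ∀ i, Differentiable ℝ fun z => F z i := fun i =>
      ((contDiff_piLp 2).1 hF i).differentiable one_ne_zero
    have hdiv := integral_divergence_of_hasFDerivAt_off_countable' 0 1 zero_le_one
      (fun i y => F (WithLp.toLp 2 y) i)
      (fun i y => (fderiv ℝ (fun z => F z i) (WithLp.toLp 2 y)).comp
        (PiLp.continuousLinearEquiv 2 ℝ _).symm.toContinuousLinearMap)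
      ∅ Set.countable_empty
      (fun i => ((hFi i).continuous.comp (PiLp.continuous_toLp 2 _)).continuousOn)
      (fun y _ i => (hFi i _).hasFDerivAt.comp y (PiLp.hasFDerivAt_toLp 2 y))
      ((hF.continuous_dvg.comp (PiLp.continuous_toLp 2 _)).continuousOn.integrableOn_compact
        isCompact_Icc)
    rw [setIntegral_unitCube]
    refine hdiv.trans (Finset.sum_eq_zero fun i _ => sub_eq_zero.2 ?_)
    congr 1
    ext x
    simp only [Pi.one_apply, Pi.zero_apply,
      Fin.insertNth_eq_insertNth_zero_add_single (a := (1 : ℝ)), WithLp.toLp_add,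
      PiLp.toLp_single, hFp.add_single]

/-- Green's identity flux: its divergence is `π L w - w L* π` for `L = -½Δ + ⟪b, ∇·⟫`. -/
noncomputable def adjointFlux (b : E → E) (w π : E → ℝ) (y : E) : E :=
  w y • ((1 / 2 : ℝ) • gradient π y + π y • b y) + π y • ((-1 / 2 : ℝ) • gradient w y)

lemma dvg_adjointFlux {b : E → E} {w π : E → ℝ} (hb : Differentiable ℝ b)
    (hw : ContDiff ℝ 2 w) (hπ : ContDiff ℝ 2 π) (x : E) :
    dvg (adjointFlux b w π) x =
      w x * ((1 / 2) * lap π x + dvg (fun y => π y • b y) x)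
        + π x * (-(1 / 2) * lap w x + ⟪b x, gradient w x⟫) := by
  have hw₁ : Differentiable ℝ w := hw.differentiable two_ne_zero
  have hπ₁ : Differentiable ℝ π := hπ.differentiable two_ne_zero
  have hgw : Differentiable ℝ (gradient w) :=
    (contDiff_gradient hw le_rfl).differentiable one_ne_zero
  have hgπ : Differentiable ℝ (gradient π) :=
    (contDiff_gradient hπ le_rfl).differentiable one_ne_zero
  unfold adjointFlux
  rw [dvg_add, dvg_smul, dvg_smul, dvg_add, dvg_const_smul, dvg_const_smul, dvg_gradient,
    dvg_gradient]
  · simp only [inner_add_right, inner_smul_right, real_inner_comm (gradient w x)]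
    ring
  all_goals fun_prop

lemma contDiff_adjointFlux {b : E → E} {w π : E → ℝ} (hb : ContDiff ℝ 1 b)
    (hw : ContDiff ℝ 2 w) (hπ : ContDiff ℝ 2 π) : ContDiff ℝ 1 (adjointFlux b w π) := by
  have hgw := contDiff_gradient hw (m := 1) le_rfl
  have hgπ := contDiff_gradient hπ (m := 1) le_rfl
  have hw₁ : ContDiff ℝ 1 w := hw.of_le one_le_two
  have hπ₁ : ContDiff ℝ 1 π := hπ.of_le one_le_two
  unfold adjointFlux
  fun_prop

lemma IsZnPeriodic.adjointFlux {b : E → E} {w π : E → ℝ} (hb : IsZnPeriodic b)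
    (hw : IsZnPeriodic w) (hπ : IsZnPeriodic π) : IsZnPeriodic (adjointFlux b w π) :=
  fun x k => by
    simp only [_root_.adjointFlux, hb x k, hw x k, hπ x k, hw.gradient x k, hπ.gradient x k]

theorem effective_drift_formula_general (n : ℕ)
    (p : EuclideanSpace ℝ (Fin n)) (j : Fin n) (c : ℝ)
    (v w π : EuclideanSpace ℝ (Fin n) → ℝ)
    (hv : ContDiff ℝ 2 v) (hw : ContDiff ℝ 2 w) (hπ : ContDiff ℝ 2 π)
    (hvp : IsZnPeriodic v) (hwp : IsZnPeriodic w) (hπp : IsZnPeriodic π)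
    (hstat : ∀ x, (1/2) * lap π x + dvg (fun y => π y • (p + gradient v y)) x = 0)
    (hnorm : ∫ x in unitCube n, π x = 1)
    (hcell : ∀ x, -(1/2) * lap w x
        + ⟪p + gradient v x, EuclideanSpace.single j 1 + gradient w x⟫ = c) :
    c = ∫ x in unitCube n, (p j + gradient v x j) * π x := by
  set b : EuclideanSpace ℝ (Fin n) → EuclideanSpace ℝ (Fin n) := fun y => p + gradient v y
  have hb : ContDiff ℝ 1 b := contDiff_const.add (contDiff_gradient hv le_rfl)
  have hbp : IsZnPeriodic b := fun x k => by simp only [b, hvp.gradient x k]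
  have hdvg : ∀ x, dvg (adjointFlux b w π) x = c * π x - (p j + gradient v x j) * π x := by
    intro x
    have hcell_x := hcell x
    rw [inner_add_right, EuclideanSpace.inner_single_right] at hcell_x
    rw [dvg_adjointFlux (hb.differentiable one_ne_zero) hw hπ, hstat x]
    simp only [b, PiLp.add_apply, one_mul, conj_trivial] at hcell_x ⊢
    linear_combination π x * hcell_x
  have hint : ∫ x in unitCube n, dvg (adjointFlux b w π) x = 0 :=
    integral_unitCube_dvg_eq_zero (contDiff_adjointFlux hb hw hπ) (hbp.adjointFlux hwp hπp)
  have hbj : Continuous fun x => p j + gradient v x j := ((contDiff_piLp 2).1 hb j).continuous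
  simp only [hdvg] at hint
  rw [integral_sub (hπ.continuous.integrableOn_unitCube.const_mul c)
    (hbj.fun_mul hπ.continuous).integrableOn_unitCube, integral_const_mul, hnorm] at hint
  linarith

/-- if π is a normalized invariant density for the drift p + ∇v and w
solves the differentiated cell problem −(1/2)Δw + (p + ∇v)·(e_j + ∇w) = c, then
c = ∫_{[0,1]ⁿ} (p_j + ∂_j v) π dx. -/
theorem effective_drift_formula (n : ℕ) (hn : 1 ≤ n)
    (p : EuclideanSpace ℝ (Fin n)) (j : Fin n) (c : ℝ)
    (v w π : EuclideanSpace ℝ (Fin n) → ℝ)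
    (hv : ContDiff ℝ 2 v) (hw : ContDiff ℝ 2 w) (hπ : ContDiff ℝ 2 π)
    (hvp : IsZnPeriodic v) (hwp : IsZnPeriodic w) (hπp : IsZnPeriodic π)
    (hstat : ∀ x, (1/2) * lap π x + dvg (fun y => π y • (p + gradient v y)) x = 0)
    (hnorm : ∫ x in unitCube n, π x = 1)
    (hcell : ∀ x, -(1/2) * lap w x
        + ⟪p + gradient v x, EuclideanSpace.single j 1 + gradient w x⟫ = c) :
    c = ∫ x in unitCube n, (p j + gradient v x j) * π x :=
  effective_drift_formula_general n p j c v w π hv hw hπ hvp hwp hπp hstat hnorm hcell
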